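/- For a convex optimization problem min f(x) s.t. g_i(x) ≤ 0, i=1,…,m, the number of support constraints (constraints whose removal strictly decreases the optimal value) is at most n, the dimension of the decision variable. -/

import Mathlib

/-!
The constraint sets `{g i ≤ 0}`, together with the strict sublevel set `{f < f xs}`, form a
family of convex sets with empty intersection (by optimality of `xs`). Deleting a support
constraint makes the intersection nonempty, and so does deleting the sublevel set (`xs` is
feasible). By Helly's theorem a family of convex sets in which every member is essential for
the emptiness of the intersection has at most `n + 1` members.
-/

open Set Module

namespace Convex

variable {ι 𝕜 E : Type*} [Finite ι] [Field 𝕜] [LinearOrder 𝕜] [IsStrictOrderedRing 𝕜]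
  [AddCommGroup E] [Module 𝕜 E] [FiniteDimensional 𝕜 E]

theorem natCard_le_finrank_succ_of_iInter_eq_empty {F : ι → Set E}
    (hconv : ∀ i, Convex 𝕜 (F i)) (hempty : ⋂ i, F i = ∅)
    (hessential : ∀ i, (⋂ (j) (_ : j ≠ i), F j).Nonempty) :
    Nat.card ι ≤ finrank 𝕜 E + 1 := by
  classical
  have := Fintype.ofFinite ι
  by_contra! hcard
  have hinter : (⋂ i ∈ Finset.univ, F i).Nonempty := by
    refine helly_theorem' (𝕜 := 𝕜) (fun i _ ↦ hconv i) fun I _ hI ↦ ?_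
    have hI_lt : I.card < (Finset.univ : Finset ι).card := by
      rw [Finset.card_univ, ← Nat.card_eq_fintype_card]
      omega
    obtain ⟨i, -, hi⟩ := Finset.exists_mem_notMem_of_card_lt_card hI_lt
    exact (hessential i).mono <| biInter_mono (fun j hj ↦ ne_of_mem_of_not_mem hj hi) fun _ _ ↦
      Subset.rfl
  simp [hempty] at hinter

end Convex

section SupportConstraints

variable {ι E : Type*} [AddCommGroup E] [Module ℝ E]

def IsSupportConstraint (f : E → ℝ) (g : ι → E → ℝ) (xs : E) (i : ι) : Prop :=
  ∃ x, (∀ j, j ≠ i → g j x ≤ 0) ∧ f x < f xs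

theorem ncard_setOf_isSupportConstraint_le_finrank [Finite ι] [FiniteDimensional ℝ E]
    {f : E → ℝ} {g : ι → E → ℝ} (hf : ConvexOn ℝ univ f) (hg : ∀ i, ConvexOn ℝ univ (g i))
    {xs : E} (hfeas : ∀ i, g i xs ≤ 0) (hopt : ∀ x, (∀ i, g i x ≤ 0) → f xs ≤ f x) :
    {i | IsSupportConstraint f g xs i}.ncard ≤ finrank ℝ E := by
  set S := {i | IsSupportConstraint f g xs i}
  -- The constraints outside `S` are merged into the sublevel set.
  let F : Option S → Set E := fun
    | none => {x | f x < f xs} ∩ ⋂ (j) (_ : j ∉ S), {x | g j x ≤ 0}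
    | some i => {x | g i x ≤ 0}
  have hconv : ∀ o, Convex ℝ (F o) := by
    rintro (_ | i)
    · have hlt : Convex ℝ {x | f x < f xs} := by simpa using hf.convex_lt (f xs)
      exact hlt.inter <| convex_iInter fun j ↦ convex_iInter fun _ ↦ by
        simpa using (hg j).convex_le 0
    · simpa using (hg i).convex_le 0
  have hempty : ⋂ o, F o = ∅ := by
    refine eq_empty_of_forall_notMem fun x hx ↦ ?_
    rw [mem_iInter] at hx
    have hfx : f x < f xs := (hx none).1
    have hgx : ∀ j, g j x ≤ 0 := fun j ↦ by
      by_cases hj : j ∈ S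
      · exact hx (some ⟨j, hj⟩)
      · exact mem_iInter₂.mp (hx none).2 j hj
    exact (hopt x hgx).not_gt hfx
  have hessential : ∀ o, (⋂ (o') (_ : o' ≠ o), F o').Nonempty := by
    rintro (_ | ⟨i, hi⟩)
    · exact ⟨xs, mem_iInter₂.mpr fun
        | none, h => absurd rfl h
        | some j, _ => hfeas j⟩
    · obtain ⟨x, hx, hfx⟩ := id hi
      refine ⟨x, mem_iInter₂.mpr fun
        | none, _ => ⟨hfx, mem_iInter₂.mpr fun j hj ↦ hx j fun h ↦ hj (h ▸ hi)⟩
        | some j, hj => hx j fun h ↦ hj (congrArg some (Subtype.ext h))⟩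
  have := Convex.natCard_le_finrank_succ_of_iInter_eq_empty hconv hempty hessential
  rw [Finite.card_option, Nat.card_coe_set_eq] at this
  omega

end SupportConstraints

/-- A feasible convex program in `ℝⁿ` with an optimal solution has at most `n`
support constraints, i.e. constraints whose removal strictly decreases the
optimal value (Hoffman 1979; Calafiore 2010, Lemma 2.2). -/
theorem support_constraints_card_le_dim {n m : ℕ}
    (f : (Fin n → ℝ) → ℝ) (g : Fin m → (Fin n → ℝ) → ℝ)
    (hf : ConvexOn ℝ Set.univ f) (hg : ∀ i, ConvexOn ℝ Set.univ (g i))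
    (xs : Fin n → ℝ)
    (hfeas : ∀ i, g i xs ≤ 0)
    (hopt : ∀ x, (∀ i, g i x ≤ 0) → f xs ≤ f x) :
    {i : Fin m | ∃ x, (∀ j, j ≠ i → g j x ≤ 0) ∧ f x < f xs}.ncard ≤ n := by
  calc {i | IsSupportConstraint f g xs i}.ncard
      ≤ finrank ℝ (Fin n → ℝ) := ncard_setOf_isSupportConstraint_le_finrank hf hg hfeas hopt
    _ = n := finrank_fin_fun ℝ
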